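/- Let k ≥ 1, n ≥ 1 and let A, B be sets of 2-element subsets of {1,…,n}. Let P be an induced path on 4k+3 vertices in G_{k,n}(A,B) containing w as an internal vertex, and suppose the two neighbors of w on P are K^0_{2k}[j] and K^1_{2k}[i]. Then i ≠ j and {i,j} ∈ B. -/
import Mathlib


/-!
The graph `G_{k,n}(A,B)` from the paper "Local certification of forbidden subgraphs".

Vertices: clique vertices `(b, ℓ, i)` where `b : Bool` is the side (false = superscript 0,
true = superscript 1), `ℓ : Fin (2*k)` is the (0-based) level, so `K^b_{ℓ+1}` in the paper's
1-based notation, and `i : Fin n` is the label inside the clique; plus three special vertices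
`Sum.inr 0 = v₀`, `Sum.inr 1 = v₁`, `Sum.inr 2 = w`.

A set `A` of 2-element subsets of `{1,…,n}` is encoded as `A : Set (Sym2 (Fin n))` all of whose
members are non-diagonal.
-/

/-- Vertex type of `G_{k,n}(A,B)`. -/
abbrev GknVert (k n : ℕ) := (Bool × Fin (2 * k) × Fin n) ⊕ Fin 3

/-- The edges of `G_{k,n}(A,B)`, given in one direction; the graph is obtained by
symmetrizing with `SimpleGraph.fromRel`. -/
def gknRel (k n : ℕ) (A B : Set (Sym2 (Fin n))) :
    GknVert k n → GknVert k n → Prop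
  | Sum.inl (b, l, i), Sum.inl (b', l', j) =>
      -- edges inside one clique
      (b = b' ∧ l = l' ∧ i ≠ j) ∨
      -- the bipartite graph `G_A` between `K^0_1` and `K^1_1`
      (b = false ∧ b' = true ∧ (l : ℕ) = 0 ∧ (l' : ℕ) = 0 ∧ (i = j ∨ s(i, j) ∉ A)) ∨
      -- the bipartite graph `G_B` between `K^0_{2k}` and `K^1_{2k}`
      (b = false ∧ b' = true ∧ (l : ℕ) = 2 * k - 1 ∧ (l' : ℕ) = 2 * k - 1 ∧
        (i = j ∨ s(i, j) ∉ B)) ∨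
      -- the perfect matchings between `K^0_ℓ` and `K^1_ℓ` for `2 ≤ ℓ ≤ 2k-1` (1-based)
      (b ≠ b' ∧ l = l' ∧ 1 ≤ (l : ℕ) ∧ (l : ℕ) ≤ 2 * k - 2 ∧ i = j) ∨
      -- the antimatchings between consecutive levels (all four pairs of cliques)
      ((l' : ℕ) = (l : ℕ) + 1 ∧ i ≠ j)
  | Sum.inl (b, l, _), Sum.inr s =>
      -- `v₀` is complete to `K^0_1`, `v₁` is complete to `K^1_1`,
      -- `w` is complete to `K^0_{2k} ∪ K^1_{2k}`
      (s = 0 ∧ b = false ∧ (l : ℕ) = 0) ∨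
      (s = 1 ∧ b = true ∧ (l : ℕ) = 0) ∨
      (s = 2 ∧ (l : ℕ) = 2 * k - 1)
  | Sum.inr _, Sum.inl _ => False
  | Sum.inr _, Sum.inr _ => False

/-- The graph `G_{k,n}(A,B)`. -/
def Gkn (k n : ℕ) (A B : Set (Sym2 (Fin n))) : SimpleGraph (GknVert k n) :=
  SimpleGraph.fromRel (gknRel k n A B)


/-- let `P` be an induced path on `4k+3` vertices in `G_{k,n}(A,B)` (given
as a graph embedding `f`) containing `w` as an interior vertex, whose two neighbours on `P`
are `K^0_{2k}[j]` and `K^1_{2k}[i]`. Then `i ≠ j` and `{i,j} ∈ B`. -/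
theorem gkn_inducedPath_w_neighbors_give_B
    (k n : ℕ) (hk : 1 ≤ k) (hn : 1 ≤ n)
    (A B : Set (Sym2 (Fin n)))
    (hA : ∀ e ∈ A, ¬ e.IsDiag) (hB : ∀ e ∈ B, ¬ e.IsDiag)
    (f : SimpleGraph.pathGraph (4 * k + 3) ↪g Gkn k n A B)
    (i j : Fin n)
    (t : ℕ) (ht0 : 0 < t) (ht1 : t < 4 * k + 2)
    (hw : f ⟨t, by omega⟩ = Sum.inr 2)
    (hnbrs : ({f ⟨t - 1, by omega⟩, f ⟨t + 1, by omega⟩} : Set (GknVert k n)) =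
      {Sum.inl (false, ⟨2 * k - 1, by omega⟩, j), Sum.inl (true, ⟨2 * k - 1, by omega⟩, i)}) :
    i ≠ j ∧ s(i, j) ∈ B := by
  set u : GknVert k n := Sum.inl (false, ⟨2 * k - 1, by omega⟩, j) with hu
  set v : GknVert k n := Sum.inl (true, ⟨2 * k - 1, by omega⟩, i) with hv
  have hne : (⟨t - 1, by omega⟩ : Fin (4 * k + 3)) ≠ ⟨t + 1, by omega⟩ := by
    simp only [ne_eq, Fin.mk.injEq]; omega
  have hGadj : ¬ (Gkn k n A B).Adj (f ⟨t - 1, by omega⟩) (f ⟨t + 1, by omega⟩) := by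
    rw [f.map_adj_iff, SimpleGraph.pathGraph_adj]
    simp only [not_or]
    omega
  have hcase : (f ⟨t - 1, by omega⟩ = u ∧ f ⟨t + 1, by omega⟩ = v) ∨
      (f ⟨t - 1, by omega⟩ = v ∧ f ⟨t + 1, by omega⟩ = u) := by
    rw [Set.pair_eq_pair_iff] at hnbrs; tauto
  by_contra hcon
  push_neg at hcon
  have hadjuv : (Gkn k n A B).Adj u v := by
    refine ⟨by simp [hu, hv], Or.inl ?_⟩
    show gknRel k n A B u v
    rw [hu, hv]
    show _ ∨ _ ∨ _ ∨ _ ∨ _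
    refine Or.inr (Or.inr (Or.inl ⟨rfl, rfl, rfl, rfl, ?_⟩))
    by_cases hij : i = j
    · exact Or.inl hij.symm
    · right
      rw [Sym2.eq_swap]
      exact hcon hij
  rcases hcase with ⟨h1, h2⟩ | ⟨h1, h2⟩
  · rw [h1, h2] at hGadj; exact hGadj hadjuv
  · rw [h1, h2] at hGadj; exact hGadj hadjuv.symm
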